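/- Let v ∈ W^{P_d} with μ = λ(v). Then for every box (i,j) ∈ D_μ, the positive root β_{(i,j)} attached to it via the row-reading reduced word of v satisfies β_{(i,j)} = ε_{v(d+j)} − ε_{v(d−i+1)}. -/

import Mathlib

/-! Type A setup: the symmetric group `S_n` realized inside `Equiv.Perm ℕ`. -/

/-- The simple transposition `s_i = (i, i+1)`. -/
def sA (i : ℕ) : Equiv.Perm ℕ := Equiv.swap i (i + 1)

/-- The product of the simple transpositions indexed by a word. -/
def wordProdA (l : List ℕ) : Equiv.Perm ℕ := (l.map sA).prod

/-- The Coxeter length of `w ∈ S_n`. -/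
noncomputable def lenA (n : ℕ) (w : Equiv.Perm ℕ) : ℕ :=
  sInf {k | ∃ l : List ℕ, l.length = k ∧ (∀ i ∈ l, 1 ≤ i ∧ i < n) ∧ wordProdA l = w}

/-- `w` is a Grassmannian permutation in `W^{P_d} ⊆ S_n`. -/
def IsGrassA (n d : ℕ) (w : Equiv.Perm ℕ) : Prop :=
  (∀ i, i = 0 ∨ n < i → w i = i) ∧
  (∀ i j, 1 ≤ i → i < j → j ≤ d → w i < w j) ∧
  (∀ i j, d < i → i < j → j ≤ n → w i < w j)

/-- The partition `λ(w)` associated to `w ∈ W^{P_d}`. -/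
def lamA (d : ℕ) (w : Equiv.Perm ℕ) : ℕ → ℕ :=
  fun j => if 1 ≤ j ∧ j ≤ d then w (d - j + 1) - (d - j + 1) else 0

/-- The Young diagram `D_λ = {(i,j) : 1 ≤ i ≤ d, 1 ≤ j ≤ λ_i}` as a `Finset`. -/
def YDA (d : ℕ) (l : ℕ → ℕ) : Finset (ℕ × ℕ) :=
  (Finset.Icc 1 d).biUnion fun i => (Finset.Icc 1 (l i)).image fun j => (i, j)

/-- Boxes of `D_μ` in row-reading order (bottom row to top, right to left). -/
def rowBoxesA (d : ℕ) (l : ℕ → ℕ) : List (ℕ × ℕ) :=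
  ((List.range d).reverse).flatMap fun i0 =>
    ((List.range (l (i0 + 1))).reverse).map fun j0 => (i0 + 1, j0 + 1)

/-- The subword permutation `w_C`: the product, in row-reading order, of the
simple reflections `s_{d-i+j}` over the boxes `(i,j) ∈ C`. -/
def subPermA (d : ℕ) (l : ℕ → ℕ) (C : Finset (ℕ × ℕ)) : Equiv.Perm ℕ :=
  (((rowBoxesA d l).filter fun p => decide (p ∈ C)).map fun p => sA (d - p.1 + p.2)).prod

/-- Elementary excitation inside the diagram `D`: a box `(i,j) ∈ C` with
`(i+1,j), (i,j+1), (i+1,j+1) ∈ D \ C` is moved to `(i+1,j+1)`. -/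
def ElemExcA (D C C' : Finset (ℕ × ℕ)) : Prop :=
  ∃ i j : ℕ, (i, j) ∈ C ∧
    (i + 1, j) ∈ D ∧ (i, j + 1) ∈ D ∧ (i + 1, j + 1) ∈ D ∧
    (i + 1, j) ∉ C ∧ (i, j + 1) ∉ C ∧ (i + 1, j + 1) ∉ C ∧
    C' = insert (i + 1, j + 1) (C.erase (i, j))

/-- `R_v(w)`: subsets `C ⊆ D_{λ(v)}` with `#C = ℓ(w)` and `w_C = w`. -/
noncomputable def RSetA (n d : ℕ) (v w : Equiv.Perm ℕ) : Set (Finset (ℕ × ℕ)) :=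
  {C | C ⊆ YDA d (lamA d v) ∧ C.card = lenA n w ∧ subPermA d (lamA d v) C = w}


section Stmt5Aux

open List

lemma sA_left (i : ℕ) : sA i i = i + 1 := by simp [sA]
lemma sA_right (i : ℕ) : sA i (i+1) = i := by simp [sA]
lemma sA_other {i x : ℕ} (h1 : x ≠ i) (h2 : x ≠ i+1) : sA i x = x :=
  Equiv.swap_apply_of_ne_of_ne h1 h2

/-- product of `sA (b+m-1) * ⋯ * sA b`. -/
def runPerm (b m : ℕ) : Equiv.Perm ℕ :=
  (((List.range m).reverse).map fun j0 => sA (b + j0)).prod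

lemma runPerm_zero (b : ℕ) : runPerm b 0 = 1 := rfl

lemma runPerm_succ (b m : ℕ) : runPerm b (m+1) = sA (b+m) * runPerm b m := by
  simp [runPerm, List.range_succ]

lemma runPerm_lt {b x : ℕ} (m : ℕ) (h : x < b) : runPerm b m x = x := by
  induction m with
  | zero => rfl
  | succ m ih =>
    rw [runPerm_succ, Equiv.Perm.mul_apply, ih]
    exact sA_other (by omega) (by omega)

lemma runPerm_gt {b x : ℕ} (m : ℕ) (h : b + m < x) : runPerm b m x = x := by
  induction m with
  | zero => rfl
  | succ m ih =>
    rw [runPerm_succ, Equiv.Perm.mul_apply, ih (by omega)]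
    exact sA_other (by omega) (by omega)

lemma runPerm_self (b m : ℕ) : runPerm b m b = b + m := by
  induction m with
  | zero => rfl
  | succ m ih =>
    rw [runPerm_succ, Equiv.Perm.mul_apply, ih, sA_left]
    omega

lemma runPerm_mid {b : ℕ} : ∀ m x, b < x → x ≤ b + m → runPerm b m x = x - 1
  | 0, x, h1, h2 => by omega
  | (m+1), x, h1, h2 => by
    rw [runPerm_succ, Equiv.Perm.mul_apply]
    by_cases hx : x ≤ b + m
    · rw [runPerm_mid m x h1 hx]
      exact sA_other (by omega) (by omega)
    · have hx2 : x = b + m + 1 := by omega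
      rw [runPerm_gt m (by omega), hx2, sA_right]
      omega

/-- the permutation of a full row `i` of the diagram. -/
def rowP (d : ℕ) (l : ℕ → ℕ) (i : ℕ) : Equiv.Perm ℕ :=
  (((List.range (l i)).reverse).map fun j0 => sA (d - i + (j0+1))).prod

lemma rowP_eq (d : ℕ) (l : ℕ → ℕ) (i : ℕ) : rowP d l i = runPerm (d - i + 1) (l i) := by
  unfold rowP runPerm
  congr 1
  apply List.map_congr_left
  intro j0 _
  congr 1
  omega

/-- product of the rows `m+t, m+t-1, …, m+1` (bottom to top). -/
def tauP (d : ℕ) (l : ℕ → ℕ) (m t : ℕ) : Equiv.Perm ℕ :=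
  (((List.range' m t).reverse).map fun i0 => rowP d l (i0+1)).prod

lemma tauP_zero (d : ℕ) (l : ℕ → ℕ) (m : ℕ) : tauP d l m 0 = 1 := rfl

lemma tauP_succ (d : ℕ) (l : ℕ → ℕ) (m t : ℕ) :
    tauP d l m (t+1) = tauP d l (m+1) t * rowP d l (m+1) := by
  simp [tauP, List.range'_succ]

lemma fixKey (d : ℕ) (l : ℕ → ℕ) (hdec : ∀ a b, 1 ≤ a → a ≤ b → l b ≤ l a) :
    ∀ t m, m + t = d → ∀ x, t + l (m+1) < x → tauP d l m t x = x
  | 0, m, hm, x, hx => by simp [tauP_zero]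
  | (t+1), m, hm, x, hx => by
    rw [tauP_succ, Equiv.Perm.mul_apply, rowP_eq]
    have hb : d - (m+1) + 1 = t + 1 := by omega
    rw [hb, runPerm_gt _ (by omega)]
    have hl2 : l (m+1+1) ≤ l (m+1) := hdec (m+1) (m+1+1) (by omega) (by omega)
    exact fixKey d l hdec t (m+1) (by omega) x (by omega)

lemma indexOf_append_cons {α : Type*} [BEq α] [LawfulBEq α] :
    ∀ (A : List α) (b : α) (B : List α), b ∉ A → (A ++ b :: B).idxOf b = A.length
  | [], b, B, _ => by simp [List.idxOf_cons]
  | a :: A, b, B, h => by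
    rw [List.cons_append, List.idxOf_cons]
    have hne : (a == b) = false := by
      simp only [beq_eq_false_iff_ne, ne_eq]
      intro he
      exact h (he ▸ List.mem_cons_self)
    rw [hne]
    simp [indexOf_append_cons A b B (fun hm => h (List.mem_cons_of_mem a hm))]

end Stmt5Aux


open MvPolynomial in
/-- The positive root `β_{(i,j)}` attached to the box `b = (i,j)` of `D_μ` via
the row-reading reduced word `s_{i_1} ⋯ s_{i_k}` of `v`:  if `b` is the `t`-th
box in row-reading order, `β_{(i,j)} = s_{i_1} ⋯ s_{i_{t-1}}(α_{i_t})`, where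
`α_i = ε_i - ε_{i+1}` and `S_n` acts on `ℤ[ε_1, ε_2, …]` by permuting the
variables. -/
noncomputable def betaBoxA (d : ℕ) (l : ℕ → ℕ) (b : ℕ × ℕ) : MvPolynomial ℕ ℤ :=
  rename
    (⇑((((rowBoxesA d l).take ((rowBoxesA d l).idxOf b)).map
        fun p => sA (d - p.1 + p.2)).prod))
    (X (d - b.1 + b.2) - X (d - b.1 + b.2 + 1))

section Stmt5Grass

variable {n d : ℕ} {v : Equiv.Perm ℕ}

lemma vG_fix0 (hv : IsGrassA n d v) : v 0 = 0 := hv.1 0 (Or.inl rfl)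

lemma vG_range (hv : IsGrassA n d v) {k : ℕ} (h1 : 1 ≤ k) (h2 : k ≤ n) :
    1 ≤ v k ∧ v k ≤ n := by
  constructor
  · by_contra h
    have h0 : v k = 0 := by omega
    have := v.injective (h0.trans (vG_fix0 hv).symm)
    omega
  · by_contra h
    have h3 : v (v k) = v k := hv.1 (v k) (Or.inr (by omega))
    have := v.injective h3
    omega

lemma vG_step (hv : IsGrassA n d v) {p q : ℕ} (h1 : 1 ≤ p) (h2 : p ≤ q) :
    q ≤ d → v p + q ≤ v q + p := by
  induction q, h2 using Nat.le_induction with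
  | base => omega
  | succ q hq ih =>
    intro h3
    have h4 := hv.2.1 q (q+1) (by omega) (by omega) h3
    have h5 := ih (by omega)
    omega

lemma vG_ge (hv : IsGrassA n d v) (hd : 1 ≤ d) (hdn : d ≤ n) {k : ℕ}
    (h1 : 1 ≤ k) (h2 : k ≤ d) : k ≤ v k := by
  have h3 := vG_step hv (le_refl 1) h1 h2
  have h4 := (vG_range hv (le_refl 1) (by omega)).1
  omega

lemma lamA_eq (hv : IsGrassA n d v) (hd : 1 ≤ d) (hdn : d ≤ n) {m : ℕ}
    (h1 : 1 ≤ m) (h2 : m ≤ d) : v (d - m + 1) = (d - m + 1) + lamA d v m := by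
  have h3 := vG_ge hv hd hdn (k := d - m + 1) (by omega) (by omega)
  unfold lamA
  rw [if_pos ⟨h1, h2⟩]
  omega

lemma lamA_zero (hd2 : ¬ (1 ≤ m ∧ m ≤ d)) : lamA d v m = 0 := by
  unfold lamA; rw [if_neg hd2]

lemma lamA_dec (hv : IsGrassA n d v) (hd : 1 ≤ d) (hdn : d ≤ n) :
    ∀ a b, 1 ≤ a → a ≤ b → lamA d v b ≤ lamA d v a := by
  intro a b h1 h2
  by_cases hb : b ≤ d
  · have e1 := lamA_eq hv hd hdn h1 (le_trans h2 hb)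
    have e2 := lamA_eq hv hd hdn (le_trans h1 h2) hb
    have e3 := vG_step hv (p := d - b + 1) (q := d - a + 1) (by omega) (by omega) (by omega)
    omega
  · rw [lamA_zero (by omega)]
    omega

lemma claimV (hv : IsGrassA n d v) (hd : 1 ≤ d) (hdn : d ≤ n) {m j : ℕ}
    (hm1 : 1 ≤ m) (hm2 : m ≤ d) (hj1 : lamA d v (m+1) < j) (hj2 : j ≤ lamA d v m) :
    v (d + j) = (d - m) + j := by
  set x := d - m + j with hxdef
  have hj0 : 1 ≤ j := by omega
  -- (a)
  have ha : ∀ k, 1 ≤ k → k ≤ d - m → v k < x := by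
    intro k h1 h2
    have e := lamA_eq hv hd hdn (m := d - k + 1) (by omega) (by omega)
    have e2 : d - (d - k + 1) + 1 = k := by omega
    rw [e2] at e
    have e3 := lamA_dec hv hd hdn (m+1) (d - k + 1) (by omega) (by omega)
    omega
  -- (b)
  have hb : ∀ k, d - m + 1 ≤ k → k ≤ d → x < v k := by
    intro k h1 h2
    have e := lamA_eq hv hd hdn (m := d - k + 1) (by omega) (by omega)
    have e2 : d - (d - k + 1) + 1 = k := by omega
    rw [e2] at e
    have e3 := lamA_dec hv hd hdn (d - k + 1) m (by omega) (by omega)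
    omega
  have hxn : x ≤ n := by
    have h1 := hb (d - m + 1) (le_refl _) (by omega)
    have h2 := (vG_range hv (k := d - m + 1) (by omega) (by omega)).2
    omega
  classical
  set S : Finset ℕ := (Finset.Icc 1 n).filter (fun k => v k ≤ x) with hS
  have hSmem : ∀ k, k ∈ S ↔ (1 ≤ k ∧ k ≤ n ∧ v k ≤ x) := by
    intro k; simp [hS, Finset.mem_filter, Finset.mem_Icc, and_assoc]
  have hSimage : S.image v = Finset.Icc 1 x := by
    ext y
    simp only [Finset.mem_image, Finset.mem_Icc]
    constructor
    · rintro ⟨k, hk, rfl⟩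
      rw [hSmem] at hk
      exact ⟨(vG_range hv hk.1 hk.2.1).1, hk.2.2⟩
    · rintro ⟨hy1, hy2⟩
      refine ⟨v.symm y, ?_, v.apply_symm_apply y⟩
      rw [hSmem]
      have hvy : v (v.symm y) = y := v.apply_symm_apply y
      have hk1 : 1 ≤ v.symm y := by
        by_contra h
        have h0 : v.symm y = 0 := by omega
        rw [h0, vG_fix0 hv] at hvy
        omega
      have hk2 : v.symm y ≤ n := by
        by_contra h
        have h3 : v (v.symm y) = v.symm y := hv.1 _ (Or.inr (by omega))
        omega
      exact ⟨hk1, hk2, by omega⟩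
  have hScard : S.card = x := by
    have h1 : (S.image v).card = S.card := Finset.card_image_of_injective S v.injective
    rw [hSimage, Nat.card_Icc] at h1
    omega
  have hdjn : d + j ≤ n := by
    by_contra hcon
    have hsub : S ⊆ Finset.Icc 1 (d-m) ∪ Finset.Icc (d+1) n := by
      intro k hk
      rw [hSmem] at hk
      simp only [Finset.mem_union, Finset.mem_Icc]
      rcases Nat.lt_or_ge k (d - m + 1) with h | h
      · left; omega
      · rcases Nat.lt_or_ge k (d + 1) with h' | h'
        · exact absurd hk.2.2 (by have := hb k h (by omega); omega)
        · right; omega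
    have hcard := Finset.card_le_card hsub
    have hun := Finset.card_union_le (Finset.Icc 1 (d-m)) (Finset.Icc (d+1) n)
    rw [hScard] at hcard
    simp only [Nat.card_Icc] at hun
    omega
  have step1 : v (d + j) ≤ x := by
    by_contra hcon
    push_neg at hcon
    have hsub : S ⊆ Finset.Icc 1 (d-m) ∪ Finset.Icc (d+1) (d+j-1) := by
      intro k hk
      rw [hSmem] at hk
      simp only [Finset.mem_union, Finset.mem_Icc]
      rcases Nat.lt_or_ge k (d - m + 1) with h | h
      · left; omega
      · rcases Nat.lt_or_ge k (d + 1) with h' | h'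
        · exact absurd hk.2.2 (by have := hb k h (by omega); omega)
        · right
          refine ⟨h', ?_⟩
          by_contra hk2
          have hkge : d + j ≤ k := by omega
          have : v (d + j) ≤ v k := by
            rcases Nat.eq_or_lt_of_le hkge with h'' | h''
            · rw [h'']
            · exact le_of_lt (hv.2.2 (d+j) k (by omega) h'' hk.2.1)
          omega
    have hcard := Finset.card_le_card hsub
    have hun := Finset.card_union_le (Finset.Icc 1 (d-m)) (Finset.Icc (d+1) (d+j-1))
    rw [hScard] at hcard
    simp only [Nat.card_Icc] at hun
    omega
  have step2 : x ≤ v (d + j) := by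
    set p := v.symm x with hp
    have hvp : v p = x := v.apply_symm_apply x
    have hp1 : 1 ≤ p := by
      by_contra h
      have h0 : p = 0 := by omega
      rw [h0, vG_fix0 hv] at hvp
      omega
    have hpn : p ≤ n := by
      by_contra h
      have h3 : v p = p := hv.1 _ (Or.inr (by omega))
      omega
    have hpd : d + 1 ≤ p := by
      rcases Nat.lt_or_ge p (d - m + 1) with h | h
      · have := ha p hp1 (by omega); omega
      · rcases Nat.lt_or_ge p (d + 1) with h' | h'
        · have := hb p h (by omega); omega
        · exact h'
    have hple : p ≤ d + j := by
      by_contra hcon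
      push_neg at hcon
      have hsubT : (Finset.Icc 1 (d-m) ∪ Finset.Icc (d+1) (d+j)) ∪ {p} ⊆ S := by
        intro k hk
        simp only [Finset.mem_union, Finset.mem_Icc, Finset.mem_singleton] at hk
        rw [hSmem]
        rcases hk with (hk | hk) | hk
        · have := ha k hk.1 hk.2
          exact ⟨hk.1, by omega, by omega⟩
        · have hvk : v k ≤ v (d + j) := by
            rcases Nat.eq_or_lt_of_le hk.2 with h'' | h''
            · rw [h'']
            · exact le_of_lt (hv.2.2 k (d+j) (by omega) h'' hdjn)
          exact ⟨by omega, by omega, by omega⟩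
        · subst hk
          exact ⟨by omega, hpn, by omega⟩
      have hdisj1 : Disjoint (Finset.Icc 1 (d-m)) (Finset.Icc (d+1) (d+j)) := by
        rw [Finset.disjoint_left]
        intro a ha1 ha2
        simp only [Finset.mem_Icc] at ha1 ha2
        omega
      have hdisj2 : Disjoint (Finset.Icc 1 (d-m) ∪ Finset.Icc (d+1) (d+j)) ({p} : Finset ℕ) := by
        rw [Finset.disjoint_right]
        intro a ha1 ha2
        simp only [Finset.mem_singleton] at ha1
        simp only [Finset.mem_union, Finset.mem_Icc] at ha2
        omega
      have hcard := Finset.card_le_card hsubT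
      rw [Finset.card_union_of_disjoint hdisj2, Finset.card_union_of_disjoint hdisj1,
        hScard] at hcard
      simp only [Nat.card_Icc, Finset.card_singleton] at hcard
      omega
    rcases Nat.eq_or_lt_of_le hple with h'' | h''
    · rw [← hvp, h'']
    · exact le_of_lt (by rw [← hvp]; exact hv.2.2 p (d+j) (by omega) h'' hdjn)
  omega

lemma klKey (hv : IsGrassA n d v) (hd : 1 ≤ d) (hdn : d ≤ n) :
    ∀ t m, m + t = d → ∀ j, 1 ≤ j → j ≤ lamA d v m →
      tauP d (lamA d v) m t (t + j) = v (d + j)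
  | 0, m, hm, j, hj1, hj2 => by
    have hm' : m = d := by omega
    rw [tauP_zero]
    have h0 : lamA d v (d + 1) = 0 := lamA_zero (by omega)
    have hcv := claimV hv hd hdn (m := d) (j := j) hd (le_refl d) (by omega) (hm' ▸ hj2)
    simp only [Equiv.Perm.one_apply]
    omega
  | (t+1), m, hm, j, hj1, hj2 => by
    have hm1 : 1 ≤ m := by
      by_contra h
      have h0 : m = 0 := by omega
      rw [h0, lamA_zero (by omega)] at hj2
      omega
    rw [tauP_succ, Equiv.Perm.mul_apply, rowP_eq]
    have hb : d - (m+1) + 1 = t + 1 := by omega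
    rw [hb]
    by_cases hc : j ≤ lamA d v (m+1)
    · rw [runPerm_mid (lamA d v (m+1)) (t+1+j) (by omega) (by omega)]
      have e : t + 1 + j - 1 = t + j := by omega
      rw [e]
      exact klKey hv hd hdn t (m+1) (by omega) j hj1 hc
    · push_neg at hc
      rw [runPerm_gt _ (by omega)]
      have hfix := fixKey d (lamA d v) (lamA_dec hv hd hdn) t (m+1) (by omega) (t+1+j)
        (by have := lamA_dec hv hd hdn (m+1) (m+1+1) (by omega) (by omega); omega)
      rw [hfix]
      have := claimV hv hd hdn (m := m) (j := j) hm1 (by omega) hc hj2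
      omega

end Stmt5Grass


open MvPolynomial in
/-- For every box `(i,j)` of `D_μ`, `μ = λ(v)`, one has
`β_{(i,j)} = ε_{v(d+j)} - ε_{v(d-i+1)}`. -/
theorem stmt5 (n d : ℕ) (hd : 1 ≤ d) (hdn : d ≤ n) (v : Equiv.Perm ℕ)
    (hv : IsGrassA n d v) :
    ∀ i j, (i, j) ∈ YDA d (lamA d v) →
      betaBoxA d (lamA d v) (i, j) =
        X (v (d + j)) - X (v (d - i + 1)) := by
  classical
  intro i j hmem
  have hij : 1 ≤ i ∧ i ≤ d ∧ 1 ≤ j ∧ j ≤ lamA d v i := by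
    simp only [YDA, Finset.mem_biUnion, Finset.mem_image, Finset.mem_Icc] at hmem
    obtain ⟨a, ha, b, hb, heq⟩ := hmem
    have h1 : a = i := congrArg Prod.fst heq
    have h2 : b = j := congrArg Prod.snd heq
    subst h1; subst h2
    exact ⟨ha.1, ha.2, hb.1, hb.2⟩
  obtain ⟨hi1, hi2, hj1, hj2⟩ := hij
  have hsplit : rowBoxesA d (lamA d v) = ((((List.range' i (d - i)).reverse).flatMap (fun i0 => ((List.range (lamA d v (i0 + 1))).reverse).map fun j0 => (i0+1, j0+1))) ++ (((List.range' j (lamA d v i - j)).reverse).map fun j0 => ((i : ℕ), j0+1))) ++ (((i, j) : ℕ × ℕ) :: ((((List.range' 0 (j-1)).reverse).map fun j0 => ((i : ℕ), j0+1)) ++ ((List.range' 0 (i-1)).reverse).flatMap (fun i0 => ((List.range (lamA d v (i0 + 1))).reverse).map fun j0 => (i0+1, j0+1)))) := by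
    have hran : List.range d = List.range' 0 i ++ List.range' i (d - i) := by
      have h := List.range'_append_1 (s := 0) (m := i) (n := d - i)
      simp only [Nat.zero_add] at h
      rw [show i + (d - i) = d from by omega] at h
      rw [List.range_eq_range']
      exact h.symm
    have h0i : List.range' 0 i = List.range' 0 (i-1) ++ [i-1] := by
      have h2 := List.range'_append_1 (s := 0) (m := i-1) (n := 1)
      simp only [Nat.zero_add] at h2
      rw [show i - 1 + 1 = i from by omega] at h2
      rw [← h2]
      rfl
    have hrj : List.range (lamA d v i) =
        (List.range' 0 (j-1) ++ [j-1]) ++ List.range' j (lamA d v i - j) := by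
      have h := List.range'_append_1 (s := 0) (m := j) (n := lamA d v i - j)
      simp only [Nat.zero_add] at h
      rw [show j + (lamA d v i - j) = lamA d v i from by omega] at h
      have h2 := List.range'_append_1 (s := 0) (m := j-1) (n := 1)
      simp only [Nat.zero_add] at h2
      rw [show j - 1 + 1 = j from by omega] at h2
      rw [List.range_eq_range', ← h, ← h2]
      rfl
    rw [show rowBoxesA d (lamA d v) = (List.range d).reverse.flatMap (fun i0 => ((List.range (lamA d v (i0 + 1))).reverse).map fun j0 => (i0+1, j0+1)) from rfl]
    rw [hran, h0i]
    simp only [List.reverse_append, List.flatMap_append, List.reverse_cons, List.flatMap_cons,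
      List.reverse_nil, List.nil_append, List.singleton_append, List.append_assoc]
    simp only [show i - 1 + 1 = i from by omega]
    rw [hrj]
    simp only [List.reverse_append, List.map_append, List.reverse_cons, List.map_cons,
      List.reverse_nil, List.nil_append, List.singleton_append, List.append_assoc]
    simp only [show j - 1 + 1 = j from by omega]
    simp only [List.cons_append, List.append_assoc]
  have hnm : ((i, j) : ℕ × ℕ) ∉ ((((List.range' i (d - i)).reverse).flatMap (fun i0 => ((List.range (lamA d v (i0 + 1))).reverse).map fun j0 => (i0+1, j0+1))) ++ (((List.range' j (lamA d v i - j)).reverse).map fun j0 => ((i : ℕ), j0+1))) := by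
    intro hmem2
    rw [List.mem_append] at hmem2
    rcases hmem2 with h | h
    · rw [List.mem_flatMap] at h
      obtain ⟨i0, hi0, hmemrow⟩ := h
      rw [List.mem_reverse, List.mem_range'] at hi0
      obtain ⟨k, hk, rfl⟩ := hi0
      rw [List.mem_map] at hmemrow
      obtain ⟨j0, _, heqp⟩ := hmemrow
      have hfst := congrArg Prod.fst heqp
      simp only [Prod.fst] at hfst
      omega
    · rw [List.mem_map] at h
      obtain ⟨j0, hj0, heqp⟩ := h
      rw [List.mem_reverse, List.mem_range'] at hj0
      obtain ⟨k, hk, rfl⟩ := hj0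
      have hsnd := congrArg Prod.snd heqp
      simp only [Prod.snd] at hsnd
      omega
  have hidx : (rowBoxesA d (lamA d v)).idxOf ((i,j) : ℕ × ℕ) = ((((List.range' i (d - i)).reverse).flatMap (fun i0 => ((List.range (lamA d v (i0 + 1))).reverse).map fun j0 => (i0+1, j0+1))) ++ (((List.range' j (lamA d v i - j)).reverse).map fun j0 => ((i : ℕ), j0+1))).length := by
    rw [hsplit]
    exact indexOf_append_cons _ _ _ hnm
  have htake : (rowBoxesA d (lamA d v)).take ((rowBoxesA d (lamA d v)).idxOf ((i,j) : ℕ × ℕ))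
      = (((List.range' i (d - i)).reverse).flatMap (fun i0 => ((List.range (lamA d v (i0 + 1))).reverse).map fun j0 => (i0+1, j0+1))) ++ (((List.range' j (lamA d v i - j)).reverse).map fun j0 => ((i : ℕ), j0+1)) := by
    rw [hidx, hsplit, List.take_left]
  have hArowsP : (((((List.range' i (d - i)).reverse).flatMap (fun i0 => ((List.range (lamA d v (i0 + 1))).reverse).map fun j0 => (i0+1, j0+1)))).map (fun p : ℕ × ℕ => sA (d - p.1 + p.2))).prod
      = tauP d (lamA d v) i (d - i) := by
    rw [List.map_flatMap, List.flatMap_def, List.prod_flatten, List.map_map]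
    simp only [tauP]
    apply congrArg
    apply List.map_congr_left
    intro i0 _
    simp only [rowP, List.map_map, List.map_reverse]
    rfl
  have hApartP : (((((List.range' j (lamA d v i - j)).reverse).map fun j0 => ((i : ℕ), j0+1))).map (fun p : ℕ × ℕ => sA (d - p.1 + p.2))).prod
      = runPerm (d - i + j + 1) (lamA d v i - j) := by
    simp only [runPerm, List.map_map, List.range'_eq_map_range, ← List.map_reverse]
    apply congrArg
    apply List.map_congr_left
    intro q _
    simp only [Function.comp_apply]
    congr 1
    omega
  have hprodEq : ((((((List.range' i (d - i)).reverse).flatMap (fun i0 => ((List.range (lamA d v (i0 + 1))).reverse).map fun j0 => (i0+1, j0+1))) ++ (((List.range' j (lamA d v i - j)).reverse).map fun j0 => ((i : ℕ), j0+1)))).map (fun p : ℕ × ℕ => sA (d - p.1 + p.2))).prod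
      = tauP d (lamA d v) i (d - i) * runPerm (d - i + j + 1) (lamA d v i - j) := by
    rw [List.map_append, List.prod_append, hArowsP, hApartP]
  have hdec := lamA_dec hv hd hdn
  have e1 : (tauP d (lamA d v) i (d - i) * runPerm (d - i + j + 1) (lamA d v i - j)) (d - i + j)
      = v (d + j) := by
    rw [Equiv.Perm.mul_apply, runPerm_lt _ (by omega)]
    exact klKey hv hd hdn (d - i) i (by omega) j hj1 hj2
  have e2 : (tauP d (lamA d v) i (d - i) * runPerm (d - i + j + 1) (lamA d v i - j)) (d - i + j + 1)
      = v (d - i + 1) := by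
    rw [Equiv.Perm.mul_apply, runPerm_self]
    rw [show d - i + j + 1 + (lamA d v i - j) = (d - i) + lamA d v i + 1 from by omega]
    have hfix := fixKey d (lamA d v) hdec (d - i) i (by omega) ((d - i) + lamA d v i + 1)
      (by have := hdec i (i+1) hi1 (by omega); omega)
    rw [hfix]
    have hle := lamA_eq hv hd hdn hi1 hi2
    omega
  rw [show betaBoxA d (lamA d v) (i,j) = (MvPolynomial.rename
      (⇑((((rowBoxesA d (lamA d v)).take ((rowBoxesA d (lamA d v)).idxOf ((i,j) : ℕ × ℕ))).map
        fun p => sA (d - p.1 + p.2)).prod))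
      (MvPolynomial.X (d - i + j) - MvPolynomial.X (d - i + j + 1)) : MvPolynomial ℕ ℤ) from rfl]
  rw [htake, hprodEq, map_sub, MvPolynomial.rename_X, MvPolynomial.rename_X, e1, e2]
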